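/- arXiv:1302.4222 — 5 statements merged into one kernel-verified Lean document; each statement's English description precedes it below -/
import Mathlib

section
/- If a > b > 0, λ ∈ [0,1], and z is a complex number with |z| < b, then λ·Re(z/(a−z)) − Re(z/(b−z)) ≥ λ·|z|/(a−|z|) − |z|/(b−|z|). -/
/-!
Write `r = ‖z‖`. Since `‖(c : ℂ) - z‖ ≥ c - r`, comparing with the modulus gives
`Re (z / (c - z)) ≤ r / (c - r)`, and the same bound applied to
`z / (b - z) - z / (a - z) = (a - b) z / ((a - z)(b - z))` shows that the deficit
`r / (c - r) - Re (z / (c - z))` is nonnegative and decreasing in `c > r`.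
Hence `λ · deficit(a) ≤ deficit(a) ≤ deficit(b)`, which is the claim.
-/

open Complex

lemma sub_norm_le_norm_ofReal_sub (c : ℝ) (z : ℂ) : c - ‖z‖ ≤ ‖(c : ℂ) - z‖ :=
  calc c - ‖z‖ ≤ ‖(c : ℂ)‖ - ‖z‖ := by
        rw [norm_real, Real.norm_eq_abs]
        linarith [le_abs_self c]
    _ ≤ ‖(c : ℂ) - z‖ := norm_sub_norm_le _ _

lemma re_div_ofReal_sub_le {c : ℝ} {z : ℂ} (hz : ‖z‖ < c) :
    (z / ((c : ℂ) - z)).re ≤ ‖z‖ / (c - ‖z‖) :=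
  calc (z / ((c : ℂ) - z)).re ≤ ‖z / ((c : ℂ) - z)‖ := re_le_norm _
    _ = ‖z‖ / ‖(c : ℂ) - z‖ := norm_div _ _
    _ ≤ ‖z‖ / (c - ‖z‖) :=
        div_le_div_of_nonneg_left (norm_nonneg z) (sub_pos.mpr hz)
          (sub_norm_le_norm_ofReal_sub c z)

lemma re_div_mul_ofReal_sub_le {a b : ℝ} {z : ℂ} (ha : ‖z‖ < a) (hb : ‖z‖ < b) :
    (z / (((a : ℂ) - z) * ((b : ℂ) - z))).re ≤ ‖z‖ / ((a - ‖z‖) * (b - ‖z‖)) :=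
  calc (z / (((a : ℂ) - z) * ((b : ℂ) - z))).re
      ≤ ‖z / (((a : ℂ) - z) * ((b : ℂ) - z))‖ := re_le_norm _
    _ = ‖z‖ / (‖(a : ℂ) - z‖ * ‖(b : ℂ) - z‖) := by rw [norm_div, norm_mul]
    _ ≤ ‖z‖ / ((a - ‖z‖) * (b - ‖z‖)) :=
        div_le_div_of_nonneg_left (norm_nonneg z)
          (mul_pos (sub_pos.mpr ha) (sub_pos.mpr hb))
          (mul_le_mul (sub_norm_le_norm_ofReal_sub a z) (sub_norm_le_norm_ofReal_sub b z)
            (sub_pos.mpr hb).le (norm_nonneg _))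

lemma div_sub_sub_div_sub {K : Type*} [Field K] {a b w : K} (ha : a - w ≠ 0) (hb : b - w ≠ 0) :
    w / (b - w) - w / (a - w) = (a - b) * (w / ((a - w) * (b - w))) := by
  field_simp
  ring

lemma norm_div_sub_norm_sub_re_div_sub_le {a b : ℝ} {z : ℂ} (hz : ‖z‖ < b) (hab : b ≤ a) :
    ‖z‖ / (a - ‖z‖) - (z / ((a : ℂ) - z)).re ≤ ‖z‖ / (b - ‖z‖) - (z / ((b : ℂ) - z)).re := by
  have ha : ‖z‖ < a := hz.trans_le hab
  have hne (c : ℝ) (hc : ‖z‖ < c) : (c : ℂ) - z ≠ 0 := by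
    rw [← norm_pos_iff]
    linarith [sub_norm_le_norm_ofReal_sub c z]
  have hreal := div_sub_sub_div_sub (sub_pos.mpr ha).ne' (sub_pos.mpr hz).ne'
  have hcomplex := congrArg re (div_sub_sub_div_sub (hne a ha) (hne b hz))
  rw [sub_re, ← ofReal_sub, re_ofReal_mul] at hcomplex
  have hbound := mul_le_mul_of_nonneg_left (re_div_mul_ofReal_sub_le ha hz) (sub_nonneg.mpr hab)
  linarith

theorem stmt11_general (a b lam : ℝ) (hab : b < a) (hlam1 : lam ≤ 1)
    (z : ℂ) (hz : ‖z‖ < b) :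
    lam * (‖z‖ / (a - ‖z‖)) - ‖z‖ / (b - ‖z‖) ≤
      lam * (z / ((a : ℂ) - z)).re - (z / ((b : ℂ) - z)).re := by
  have hdeficit_nonneg : 0 ≤ ‖z‖ / (a - ‖z‖) - (z / ((a : ℂ) - z)).re :=
    sub_nonneg.mpr (re_div_ofReal_sub_le (hz.trans hab))
  have hdeficit_le := norm_div_sub_norm_sub_re_div_sub_le hz hab.le
  have hscaled := mul_le_of_le_one_left hdeficit_nonneg hlam1
  linarith

theorem stmt11 (a b lam : ℝ) (hb : 0 < b) (hab : b < a) (hlam0 : 0 ≤ lam) (hlam1 : lam ≤ 1)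
    (z : ℂ) (hz : ‖z‖ < b) :
    lam * (‖z‖ / (a - ‖z‖)) - ‖z‖ / (b - ‖z‖) ≤
      lam * (z / ((a : ℂ) - z)).re - (z / ((b : ℂ) - z)).re :=
  stmt11_general a b lam hab hlam1 z hz
end

section
/- If a ≥ b > 0 and z is a complex number with |z| < b, then Re(z/(a−z)) − |z|/(a−|z|) ≥ Re(z/(b−z)) − |z|/(b−|z|). Equivalently, for fixed z with |z| < b, the function t ↦ Re(z/(t−z)) − |z|/(t−|z|) is increasing on [b, ∞). -/
/-!
With r = |z| and t > r, one computes
  Re(z/(t-z)) - r/(t-r) = (Re z - r) / ((t-r)/(t+r) · |t-z|²/t).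
The numerator is a nonpositive constant, while both factors of the denominator are positive and
increasing in t: the first is 1 - 2r/(t+r), and |t-z|²/t = t - 2 Re z + r²/t has derivative
1 - r²/t² > 0. Hence the whole expression increases on (r, ∞).
-/

open Set

lemma MonotoneOn.const_div_of_nonpos {α : Type*} [Preorder α] {s : Set α} {φ : α → ℝ} {c : ℝ}
    (hφ : MonotoneOn φ s) (hφ₀ : ∀ x ∈ s, 0 < φ x) (hc : c ≤ 0) :
    MonotoneOn (fun x => c / φ x) s := by
  intro x hx y hy hxy
  have h := div_le_div_of_nonneg_left (neg_nonneg.2 hc) (hφ₀ x hx) (hφ hx hy hxy)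
  rw [neg_div, neg_div] at h
  exact neg_le_neg_iff.1 h

lemma monotoneOn_sub_div_add {r : ℝ} (hr : 0 ≤ r) :
    MonotoneOn (fun t : ℝ => (t - r) / (t + r)) (Ioi (-r)) := by
  intro s hs t ht hst
  rw [mem_Ioi] at hs ht
  rw [div_le_div_iff₀ (by linarith) (by linarith)]
  nlinarith

namespace Complex

lemma norm_ofReal_sub_sq (t : ℝ) (z : ℂ) : ‖(t : ℂ) - z‖ ^ 2 = t ^ 2 - 2 * t * z.re + ‖z‖ ^ 2 := by
  simp only [Complex.sq_norm, normSq_apply, sub_re, sub_im, ofReal_re, ofReal_im]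
  ring

lemma re_div_ofReal_sub (z : ℂ) (t : ℝ) :
    (z / ((t : ℂ) - z)).re = (t * z.re - ‖z‖ ^ 2) / ‖(t : ℂ) - z‖ ^ 2 := by
  rw [div_re, ← add_div]
  simp only [Complex.sq_norm, normSq_apply, sub_re, sub_im, ofReal_re, ofReal_im]
  ring

lemma norm_ofReal_sub_pos {z : ℂ} {t : ℝ} (ht : ‖z‖ < t) : 0 < ‖(t : ℂ) - z‖ := by
  have := norm_sub_norm_le (t : ℂ) z
  rw [norm_real, Real.norm_eq_abs, abs_of_pos ((norm_nonneg z).trans_lt ht)] at this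
  linarith

lemma monotoneOn_norm_ofReal_sub_sq_div (z : ℂ) :
    MonotoneOn (fun t : ℝ => ‖(t : ℂ) - z‖ ^ 2 / t) (Ioi ‖z‖) := by
  intro s hs t ht hst
  rw [mem_Ioi] at hs ht
  have hr := norm_nonneg z
  simp only [norm_ofReal_sub_sq]
  rw [div_le_div_iff₀ (by linarith) (by linarith)]
  have hst' : ‖z‖ ^ 2 ≤ s * t := by nlinarith
  nlinarith [mul_nonneg (sub_nonneg.2 hst) (sub_nonneg.2 hst')]

lemma re_div_ofReal_sub_sub_norm_div_eq {z : ℂ} {t : ℝ} (ht : ‖z‖ < t) :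
    (z / ((t : ℂ) - z)).re - ‖z‖ / (t - ‖z‖) =
      (z.re - ‖z‖) / ((t - ‖z‖) / (t + ‖z‖) * (‖(t : ℂ) - z‖ ^ 2 / t)) := by
  have hr := norm_nonneg z
  have hd : 0 < t ^ 2 - 2 * t * z.re + ‖z‖ ^ 2 := by
    rw [← norm_ofReal_sub_sq]; exact pow_pos (norm_ofReal_sub_pos ht) 2
  rw [re_div_ofReal_sub, norm_ofReal_sub_sq, div_sub_div _ _ hd.ne' (by linarith)]
  field_simp
  ring

lemma monotoneOn_re_div_ofReal_sub_sub_norm_div (z : ℂ) :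
    MonotoneOn (fun t : ℝ => (z / ((t : ℂ) - z)).re - ‖z‖ / (t - ‖z‖)) (Ioi ‖z‖) := by
  have hr := norm_nonneg z
  refine MonotoneOn.congr ?_ fun t ht => (re_div_ofReal_sub_sub_norm_div_eq ht).symm
  refine MonotoneOn.const_div_of_nonpos ?_ (fun t ht => ?_) (by linarith [re_le_norm z])
  · refine ((monotoneOn_sub_div_add hr).mono ?_).mul (monotoneOn_norm_ofReal_sub_sq_div z)
      (fun t ht => ?_) (fun t ht => ?_)
    · exact Ioi_subset_Ioi (by linarith)
    · rw [mem_Ioi] at ht; exact div_nonneg (by linarith) (by linarith)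
    · rw [mem_Ioi] at ht; exact div_nonneg (sq_nonneg _) (by linarith)
  · rw [mem_Ioi] at ht
    have := norm_ofReal_sub_pos ht
    exact mul_pos (div_pos (by linarith) (by linarith)) (div_pos (by positivity) (by linarith))

end Complex

theorem stmt12_general (a b : ℝ) (hab : b ≤ a) (z : ℂ) (hz : ‖z‖ < b) :
    ((z / ((b : ℂ) - z)).re - ‖z‖ / (b - ‖z‖) ≤
      (z / ((a : ℂ) - z)).re - ‖z‖ / (a - ‖z‖)) ∧
    MonotoneOn (fun t : ℝ => (z / ((t : ℂ) - z)).re - ‖z‖ / (t - ‖z‖))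
      (Set.Ici b) := by
  have mono := (Complex.monotoneOn_re_div_ofReal_sub_sub_norm_div z).mono (Ici_subset_Ioi.2 hz)
  exact ⟨mono self_mem_Ici hab hab, mono⟩

theorem stmt12 (a b : ℝ) (hb : 0 < b) (hab : b ≤ a) (z : ℂ) (hz : ‖z‖ < b) :
    ((z / ((b : ℂ) - z)).re - ‖z‖ / (b - ‖z‖) ≤
      (z / ((a : ℂ) - z)).re - ‖z‖ / (a - ‖z‖)) ∧
    MonotoneOn (fun t : ℝ => (z / ((t : ℂ) - z)).re - ‖z‖ / (t - ‖z‖))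
      (Set.Ici b) :=
  stmt12_general a b hab z hz
end

section
/- If ν ≥ 0 and x ∈ (0,1], then J_ν(x) − x J_{ν+1}(x) > 0. Consequently the smallest positive zero α_{ν,1} of the Dini function z ↦ (1−ν)J_ν(z) + z J_ν'(z) = J_ν(z) − z J_{ν+1}(z) satisfies α_{ν,1} > 1. -/
/-!
With `w = (z/2)²` one has `J_ν(z) = (z/2)^ν g_ν(w)` for the entire series
`g_ν(w) = ∑ cₙ(ν) wⁿ`, `cₙ(ν) = (-1)ⁿ / (n! Γ(n+ν+1))`, and `g_ν' = -g_{ν+1}` because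
`(n+1) c_{n+1}(ν) = -cₙ(ν+1)`. Hence `z J_ν' = ν J_ν - z J_{ν+1}`, so the Dini function is
`J_ν(z) - z J_{ν+1}(z) = (z/2)^ν ∑ (2n+1) cₙ(ν) wⁿ`. For `0 ≤ w ≤ 1/4` this series alternates
with decreasing terms, so it is at least the difference of its first two terms, which is positive.
-/

open Complex

/-- The Bessel function of the first kind of real order `ν`, defined for complex `z`
by its power series, with all complex powers taken with the principal branch. -/
noncomputable def besselJ (ν : ℝ) (z : ℂ) : ℂ :=
  ∑' n : ℕ, ((-1 : ℂ) ^ n / ((n.factorial : ℂ) * Complex.Gamma ((n : ℂ) + (ν : ℂ) + 1))) *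
    (z / 2) ^ (2 * (n : ℂ) + (ν : ℂ))

open scoped Nat

noncomputable def besselCoeff (ν : ℝ) (n : ℕ) : ℝ :=
  (-1) ^ n / (n ! * Real.Gamma (n + ν + 1))

theorem besselCoeff_add_one (ν : ℝ) (n : ℕ) :
    besselCoeff (ν + 1) n = -((n : ℝ) + 1) * besselCoeff ν (n + 1) := by
  have hn : (n : ℝ) + 1 ≠ 0 := by positivity
  rw [besselCoeff, besselCoeff, Nat.factorial_succ, Nat.cast_mul, Nat.cast_succ, pow_succ,
    show (n : ℝ) + 1 + ν + 1 = n + (ν + 1) + 1 by ring, mul_assoc, ← mul_div_mul_left _ _ hn]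
  ring

theorem Real.Gamma_le_Gamma_natCast_add {s : ℝ} (hs : 1 ≤ s) (n : ℕ) :
    Real.Gamma s ≤ Real.Gamma (n + s) := by
  induction n with
  | zero => simp
  | succ n ih =>
    have hpos : 0 < (n : ℝ) + s := by positivity
    rw [Nat.cast_succ, add_right_comm, Real.Gamma_add_one hpos.ne']
    nlinarith [Real.Gamma_pos_of_pos hpos]

theorem abs_besselCoeff_le {ν : ℝ} (hν : 0 ≤ ν) (n : ℕ) :
    |besselCoeff ν n| ≤ 1 / (n ! * Real.Gamma (ν + 1)) := by
  have hΓ := Real.Gamma_le_Gamma_natCast_add (s := ν + 1) (by linarith) n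
  have hpos := Real.Gamma_pos_of_pos (show 0 < ν + 1 by linarith)
  rw [besselCoeff, add_assoc, abs_div, abs_pow, abs_neg, abs_one, one_pow,
    abs_of_pos (by positivity [hpos.trans_le hΓ])]
  gcongr

theorem summable_abs_besselCoeff_mul_pow {ν : ℝ} (hν : 0 ≤ ν) (r : ℝ) :
    Summable fun n => |besselCoeff ν n| * r ^ n := by
  refine .of_norm_bounded ((Real.summable_pow_div_factorial |r|).div_const (Real.Gamma (ν + 1)))
    fun n => ?_
  rw [norm_mul, norm_pow, Real.norm_eq_abs, Real.norm_eq_abs, abs_abs, div_div, mul_comm,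
    div_eq_mul_one_div]
  gcongr
  exact abs_besselCoeff_le hν n

theorem summable_besselCoeff_mul_pow {ν : ℝ} (hν : 0 ≤ ν) (w : ℂ) :
    Summable fun n => (besselCoeff ν n : ℂ) * w ^ n :=
  .of_norm <| by simpa [norm_mul, norm_pow] using summable_abs_besselCoeff_mul_pow hν ‖w‖

noncomputable def besselSeries (ν : ℝ) (w : ℂ) : ℂ :=
  ∑' n, (besselCoeff ν n : ℂ) * w ^ n

theorem besselSeries_add_one (ν : ℝ) (w : ℂ) :
    besselSeries (ν + 1) w = -∑' n : ℕ, ((n : ℂ) + 1) * besselCoeff ν (n + 1) * w ^ n := by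
  rw [besselSeries, ← tsum_neg]
  congr with n
  rw [besselCoeff_add_one]
  push_cast
  ring

theorem hasDerivAt_besselSeries {ν : ℝ} (hν : 0 ≤ ν) (w : ℂ) :
    HasDerivAt (besselSeries ν) (-besselSeries (ν + 1) w) w := by
  set R := ‖w‖ + 1
  have hw : w ∈ Metric.ball (0 : ℂ) R := by simp [R]
  have hu : Summable fun n => |besselCoeff ν n| * n * R ^ (n - 1) := by
    -- `(n + 1) |cₙ₊₁(ν)| = |cₙ(ν + 1)|`: the majorant is that of `g_{ν+1}`, shifted by one
    rw [← summable_nat_add_iff 1]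
    refine (summable_abs_besselCoeff_mul_pow (by linarith : 0 ≤ ν + 1) R).congr fun n => ?_
    rw [besselCoeff_add_one, abs_mul, abs_neg, abs_of_pos (by positivity)]
    push_cast
    ring
  have hbound : ∀ n, ∀ y ∈ Metric.ball (0 : ℂ) R,
      ‖(besselCoeff ν n : ℂ) * (n * y ^ (n - 1))‖ ≤ |besselCoeff ν n| * n * R ^ (n - 1) := by
    intro n y hy
    rw [mem_ball_zero_iff] at hy
    rw [norm_mul, norm_mul, norm_pow, Complex.norm_real, Complex.norm_natCast, Real.norm_eq_abs,
      ← mul_assoc]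
    gcongr
  have hsum := hasDerivAt_tsum_of_isPreconnected hu Metric.isOpen_ball
    (convex_ball _ _).isPreconnected (fun n y _ => (hasDerivAt_pow n y).const_mul _) hbound hw
    (summable_besselCoeff_mul_pow hν w) hw
  refine hsum.congr_deriv ?_
  rw [besselSeries_add_one, neg_neg,
    (Summable.of_norm_bounded hu fun n => hbound n w hw).tsum_eq_zero_add]
  simp only [Nat.cast_zero, zero_mul, mul_zero, zero_add, Nat.cast_succ, add_tsub_cancel_right]
  exact tsum_congr fun n => by ring

theorem besselJ_eq_cpow_mul_besselSeries (ν : ℝ) {z : ℂ} (hz : z ≠ 0) :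
    besselJ ν z = (z / 2) ^ (ν : ℂ) * besselSeries ν ((z / 2) ^ 2) := by
  rw [besselJ, besselSeries, ← tsum_mul_left]
  congr with n
  have hΓ : Complex.Gamma (n + ν + 1) = (Real.Gamma (n + ν + 1) : ℂ) := by
    rw [← Complex.Gamma_ofReal]
    push_cast
    rfl
  rw [cpow_add _ _ (div_ne_zero hz two_ne_zero),
    show 2 * (n : ℂ) = ((2 * n : ℕ) : ℂ) by push_cast; rfl, cpow_natCast, pow_mul, besselCoeff, hΓ]
  push_cast
  ring

theorem mul_deriv_besselJ {ν : ℝ} (hν : 0 ≤ ν) {z : ℂ} (hz : z ∈ slitPlane) :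
    z * deriv (besselJ ν) z = ν * besselJ ν z - z * besselJ (ν + 1) z := by
  have hz0 : z ≠ 0 := slitPlane_ne_zero hz
  have hhalf : HasDerivAt (fun z : ℂ => z / 2) (1 / 2) z := (hasDerivAt_id z).div_const 2
  have hslit : z / 2 ∈ slitPlane := by
    rw [mem_slitPlane_iff] at hz ⊢
    simpa [div_ofNat_re, div_ofNat_im] using hz
  have hJ := ((hhalf.cpow_const (c := (ν : ℂ)) hslit).mul
    ((hasDerivAt_besselSeries hν _).comp z (hhalf.pow 2))).congr_of_eventuallyEq
    ((eventually_ne_nhds hz0).mono fun y hy => besselJ_eq_cpow_mul_besselSeries ν hy)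
  have hsucc (c : ℂ) : (z / 2) ^ (c + 1) = (z / 2) ^ c * (z / 2) := by
    rw [cpow_add _ _ (div_ne_zero hz0 two_ne_zero), cpow_one]
  have hpred : (z / 2) ^ (ν : ℂ) = (z / 2) ^ ((ν : ℂ) - 1) * (z / 2) := by
    rw [← hsucc, sub_add_cancel]
  rw [hJ.deriv, besselJ_eq_cpow_mul_besselSeries ν hz0, besselJ_eq_cpow_mul_besselSeries _ hz0,
    ofReal_add, ofReal_one, hsucc, hpred]
  simp only [Function.comp_apply, Pi.pow_apply]
  ring

theorem hasSum_odd_mul_besselCoeff_mul_pow {ν : ℝ} (hν : 0 ≤ ν) (w : ℂ) :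
    HasSum (fun n : ℕ => ((2 * n + 1) * besselCoeff ν n : ℝ) * w ^ n)
      (besselSeries ν w - 2 * w * besselSeries (ν + 1) w) := by
  have hshift : HasSum (fun n : ℕ => 2 * (n : ℂ) * besselCoeff ν n * w ^ n)
      (-(2 * w) * besselSeries (ν + 1) w) := by
    rw [← hasSum_nat_add_iff' 1, Finset.sum_range_one, Nat.cast_zero, mul_zero, zero_mul,
      zero_mul, sub_zero]
    refine ((summable_besselCoeff_mul_pow (by linarith : 0 ≤ ν + 1) w).hasSum.mul_left
      (-(2 * w))).congr_fun fun n => ?_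
    rw [besselCoeff_add_one]
    push_cast
    ring
  convert (summable_besselCoeff_mul_pow hν w).hasSum.add hshift using 1
  · ext n
    push_cast
    ring
  · rw [besselSeries]
    ring

theorem pos_of_hasSum_odd_mul_besselCoeff_mul_pow {ν w l : ℝ} (hν : 0 ≤ ν) (hw0 : 0 ≤ w)
    (hw1 : w ≤ 1 / 4) (h : HasSum (fun n : ℕ => (2 * n + 1) * besselCoeff ν n * w ^ n) l) :
    0 < l := by
  have hΓ (n : ℕ) : 0 < Real.Gamma (n + ν + 1) := Real.Gamma_pos_of_pos (by positivity)
  have hΓ_succ (n : ℕ) :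
      Real.Gamma ((n + 1 : ℕ) + ν + 1) = (n + ν + 1) * Real.Gamma (n + ν + 1) := by
    rw [← Real.Gamma_add_one (by positivity)]
    push_cast
    ring_nf
  set a : ℕ → ℝ := fun n => (2 * n + 1) * w ^ n / (n ! * Real.Gamma (n + ν + 1))
  have hratio (n : ℕ) :
      a (n + 1) = a n * ((2 * n + 3) * w / ((2 * n + 1) * (n + 1) * (n + ν + 1))) := by
    simp only [a, hΓ_succ, Nat.factorial_succ, Nat.cast_mul, pow_succ]
    have := hΓ n
    field_simp
    push_cast
    ring
  have hanti : Antitone a := by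
    refine antitone_nat_of_succ_le fun n => ?_
    rw [hratio]
    refine mul_le_of_le_one_right (by positivity [hΓ n]) ?_
    rw [div_le_one (by positivity)]
    have hn : (0 : ℝ) ≤ n := n.cast_nonneg
    have h1 : 1 ≤ ((n : ℝ) + 1) * (n + ν + 1) := by nlinarith
    nlinarith
  have hle := hanti.alternating_series_le_tendsto (h.tendsto_sum_nat.congr fun n =>
    Finset.sum_congr rfl fun i _ => by simp only [a, besselCoeff]; ring) 1
  have ha0 : 0 < a 0 := div_pos (by positivity) (mul_pos (by positivity) (hΓ 0))
  have ha1 : a 1 = a 0 * (3 * w / (ν + 1)) := by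
    rw [hratio 0]
    norm_num
  have hq : 3 * w / (ν + 1) < 1 := by
    rw [div_lt_one (by positivity)]
    linarith
  simp only [Finset.sum_range_succ, Finset.sum_range_zero, ha1] at hle
  nlinarith

theorem besselJ_sub_mul_besselJ_add_one (ν : ℝ) {z : ℂ} (hz : z ≠ 0) :
    besselJ ν z - z * besselJ (ν + 1) z = (z / 2) ^ (ν : ℂ) *
      (besselSeries ν ((z / 2) ^ 2) - 2 * (z / 2) ^ 2 * besselSeries (ν + 1) ((z / 2) ^ 2)) := by
  rw [besselJ_eq_cpow_mul_besselSeries ν hz, besselJ_eq_cpow_mul_besselSeries _ hz, ofReal_add,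
    ofReal_one, cpow_add _ _ (div_ne_zero hz two_ne_zero), cpow_one]
  ring

theorem re_besselJ_sub_mul_besselJ_add_one_pos {ν x : ℝ} (hν : 0 ≤ ν) (hx : 0 < x)
    (hx1 : x ≤ 1) :
    0 < (besselJ ν x - x * besselJ (ν + 1) x).re := by
  rw [besselJ_sub_mul_besselJ_add_one ν (ofReal_ne_zero.mpr hx.ne'),
    show (x : ℂ) / 2 = (x / 2 : ℝ) by push_cast; rfl, ← ofReal_cpow (by positivity),
    ← ofReal_pow, re_ofReal_mul]
  refine mul_pos (by positivity) (pos_of_hasSum_odd_mul_besselCoeff_mul_pow hν (w := (x / 2) ^ 2)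
    (by positivity) (by nlinarith) ?_)
  simpa [← ofReal_pow] using hasSum_re (hasSum_odd_mul_besselCoeff_mul_pow hν ((x / 2) ^ 2 : ℝ))

theorem stmt15 (ν : ℝ) (hν : 0 ≤ ν) :
    (∀ x : ℝ, 0 < x → x ≤ 1 →
      0 < (besselJ ν (x : ℂ) - (x : ℂ) * besselJ (ν + 1) (x : ℂ)).re) ∧
    ∀ a : ℝ, IsLeast {x : ℝ | 0 < x ∧
      ((1 - ν : ℝ) : ℂ) * besselJ ν (x : ℂ) + (x : ℂ) * deriv (besselJ ν) (x : ℂ) = 0} a →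
      1 < a := by
  refine ⟨fun x hx hx1 => re_besselJ_sub_mul_besselJ_add_one_pos hν hx hx1, ?_⟩
  rintro a ⟨⟨ha, hdini⟩, -⟩
  by_contra! ha1
  have hdini_eq : ((1 - ν : ℝ) : ℂ) * besselJ ν a + a * deriv (besselJ ν) a =
      besselJ ν a - a * besselJ (ν + 1) a := by
    rw [mul_deriv_besselJ hν (ofReal_mem_slitPlane.mpr ha)]
    push_cast
    ring
  have hpos := re_besselJ_sub_mul_besselJ_add_one_pos hν ha ha1
  rw [← hdini_eq, hdini, zero_re] at hpos
  exact hpos.false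
end

section
/- The function Λ : (−2, ∞) → ℝ defined by Λ(ν) = 2^{ν+1} Γ(ν+2) J_{ν+1}(1) = 1 + Σ_{n≥1} (−1)^n / (4^n n! (ν+2)(ν+3)⋯(ν+n+1)) is strictly increasing on (−2, ∞). Consequently the equation J_{ν+1}(1) = 0 has a unique root ν⋆ in (−2, ∞) (ν⋆ ≈ −1.7744), and J_{ν+1}(1) > 0 for every ν > ν⋆. -/
open Complex

/-- `Λ(ν) = 1 + Σ_{n≥1} (−1)^n / (4^n n! (ν+2)(ν+3)⋯(ν+n+1))`. -/
noncomputable def Lam (ν : ℝ) : ℝ :=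
  1 + ∑' n : ℕ, (-1 : ℝ) ^ (n + 1) /
    (4 ^ (n + 1) * ((n + 1).factorial : ℝ) * ∏ k ∈ Finset.range (n + 1), (ν + 2 + (k : ℝ)))

/-!
Write `Λ(ν) = ∑_{n ≥ 0} a_n(ν)` with `a_n(ν) = (-1)^n / (4^n n! (ν+2)_n)`. Grouping the terms of
indices `2m+1, 2m+2` gives `-(4^(2m+1) (2m+1)!)⁻¹ ((ν+3)_{2m})⁻¹ g(ν+2)` with
`g(u) = u⁻¹ (1 - (4 (2m+2) (u+2m+1))⁻¹)`; both variable factors are positive and decreasing, the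
second strictly, so every group, hence `Λ`, is strictly increasing. These groups are negative, while
the groups of indices `2m, 2m+1` with `m ≥ 1` are positive; this gives `Λ(-2 + 1/12) < 0 < Λ(0)`,
and `Λ` is continuous by uniform convergence, so it has exactly one zero. Finally
`Γ(ν+2+n) = Γ(ν+2) (ν+2)_n` identifies `Λ(ν)` term by term with `2^(ν+1) Γ(ν+2) J_{ν+1}(1)`, a
positive multiple of `J_{ν+1}(1)`.
-/

open Finset Nat

lemma Summable.hasSum_add_pairs {E : Type*} [NormedAddCommGroup E] [CompleteSpace E]
    {f : ℕ → E} (hf : Summable f) :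
    HasSum (fun m => f (2 * m) + f (2 * m + 1)) (∑' n, f n) := by
  have heven := hf.comp_injective (mul_right_injective₀ two_ne_zero)
  have hodd := hf.comp_injective ((add_left_injective 1).comp (mul_right_injective₀ two_ne_zero))
  rw [← tsum_even_add_odd heven hodd]
  exact heven.hasSum.add hodd.hasSum

lemma prod_add_natCast_pos {a : ℝ} (ha : 0 < a) (n : ℕ) : 0 < ∏ k ∈ range n, (a + k) :=
  prod_pos fun k _ => by positivity

lemma min_one_le_prod_add_natCast {a : ℝ} (ha : 0 ≤ a) (n : ℕ) :
    min 1 a ≤ ∏ k ∈ range n, (a + k) := by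
  cases n with
  | zero => simp
  | succ n =>
    have : 1 ≤ ∏ k ∈ range n, (a + (k + 1 : ℕ)) :=
      Finset.one_le_prod fun k _ => by push_cast; linarith [(k.cast_nonneg : (0 : ℝ) ≤ k)]
    rw [prod_range_succ', Nat.cast_zero, add_zero]
    nlinarith [min_le_right 1 a]

lemma one_sub_inv_four_mul_pos {u n : ℝ} (hu : 0 < u) (hn : 1 ≤ n) :
    0 < 1 - (4 * (n + 1) * (u + n))⁻¹ :=
  sub_pos.2 (inv_lt_one_of_one_lt₀ (by nlinarith))

lemma strictAntiOn_inv_mul_one_sub_inv {n : ℝ} (hn : 1 ≤ n) :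
    StrictAntiOn (fun u : ℝ => u⁻¹ * (1 - (4 * (n + 1) * (u + n))⁻¹)) (Set.Ioi 0) := by
  intro u (hu : 0 < u) v (hv : 0 < v) huv
  have hprod : u + v + n < 4 * (n + 1) * ((u + n) * (v + n)) := by
    have h1 : u + n ≤ (u + n) * (v + n) := le_mul_of_one_le_right (by linarith) (by linarith)
    have h2 : v + n ≤ (u + n) * (v + n) := le_mul_of_one_le_left (by linarith) (by linarith)
    nlinarith
  -- `key` expands to `(v - u) (u + v + n) < 4 (n + 1) (v - u) (u + n) (v + n)`.
  have key : (4 * (n + 1) * (v + n) - 1) * u * (u + n) <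
      (4 * (n + 1) * (u + n) - 1) * v * (v + n) := by
    nlinarith [mul_lt_mul_of_pos_left hprod (sub_pos.2 huv)]
  simp only
  field_simp
  linarith

lemma Gamma_add_natCast_eq_mul_prod {z : ℂ} (hz : ∀ k : ℕ, z + k ≠ 0) (n : ℕ) :
    Complex.Gamma (z + n) = Complex.Gamma z * ∏ k ∈ range n, (z + k) := by
  induction n with
  | zero => simp
  | succ n ih =>
    rw [Nat.cast_succ, ← add_assoc, Complex.Gamma_add_one _ (hz n), ih, prod_range_succ]
    ring

lemma two_cpow_mul_half_cpow (s : ℂ) (n : ℕ) :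
    (2 : ℂ) ^ s * ((1 : ℂ) / 2) ^ (2 * (n : ℂ) + s) = ((4 : ℂ) ^ n)⁻¹ := by
  have harg : (2 : ℂ).arg ≠ Real.pi := by
    rw [show (2 : ℂ) = ((2 : ℝ) : ℂ) by norm_num, Complex.arg_ofReal_of_nonneg zero_le_two]
    exact Real.pi_ne_zero.symm
  rw [one_div, Complex.inv_cpow _ _ harg, ← div_eq_mul_inv, ← Complex.cpow_sub _ _ two_ne_zero,
    show s - (2 * (n : ℂ) + s) = -((2 * n : ℕ) : ℂ) by push_cast; ring, Complex.cpow_neg,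
    Complex.cpow_natCast, pow_mul]
  norm_num

noncomputable def lamTerm (ν : ℝ) (n : ℕ) : ℝ :=
  (-1) ^ n / (4 ^ n * (n ! : ℝ) * ∏ k ∈ range n, (ν + 2 + (k : ℝ)))

lemma Lam_eq_one_add_tsum (ν : ℝ) : Lam ν = 1 + ∑' n, lamTerm ν (n + 1) := rfl

lemma lamTerm_zero (ν : ℝ) : lamTerm ν 0 = 1 := by simp [lamTerm]

lemma lamTerm_succ (ν : ℝ) (n : ℕ) :
    lamTerm ν (n + 1) = -lamTerm ν n / (4 * (n + 1) * (ν + 2 + n)) := by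
  rw [lamTerm, lamTerm, neg_div, div_div, ← neg_div, prod_range_succ, factorial_succ, pow_succ,
    pow_succ]
  push_cast
  congr 1 <;> ring

lemma lamTerm_add_lamTerm_succ (ν : ℝ) (n : ℕ) :
    lamTerm ν n + lamTerm ν (n + 1) = lamTerm ν n * (1 - (4 * (n + 1) * (ν + 2 + n))⁻¹) := by
  rw [lamTerm_succ]
  ring

lemma abs_lamTerm {ν : ℝ} (hν : -2 < ν) (n : ℕ) :
    |lamTerm ν n| = (4 ^ n * (n ! : ℝ) * ∏ k ∈ range n, (ν + 2 + (k : ℝ)))⁻¹ := by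
  have := prod_add_natCast_pos (a := ν + 2) (by linarith) n
  rw [lamTerm, abs_div, abs_pow, abs_neg, abs_one, one_pow, abs_of_pos (by positivity), one_div]

lemma abs_lamTerm_le {c x : ℝ} (hc : -2 < c) (hcx : c ≤ x) (n : ℕ) :
    |lamTerm x n| ≤ (min 1 (c + 2))⁻¹ * 4⁻¹ ^ n := by
  have hm : 0 < min 1 (c + 2) := lt_min one_pos (by linarith)
  have hP : min 1 (c + 2) ≤ ∏ k ∈ range n, (x + 2 + k) :=
    (min_le_min_left 1 (by linarith)).trans (min_one_le_prod_add_natCast (by linarith) n)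
  have hfac : (1 : ℝ) ≤ n ! := by exact_mod_cast n.factorial_pos
  rw [abs_lamTerm (hc.trans_le hcx), inv_pow, ← mul_inv]
  refine inv_anti₀ (by positivity) ?_
  calc min 1 (c + 2) * 4 ^ n = 4 ^ n * 1 * min 1 (c + 2) := by ring
    _ ≤ _ := by gcongr

lemma summable_lamTerm {ν : ℝ} (hν : -2 < ν) : Summable (lamTerm ν) :=
  .of_norm_bounded ((summable_geometric_of_lt_one (by norm_num) (by norm_num)).mul_left _)
    (abs_lamTerm_le hν le_rfl)

lemma Lam_eq_tsum {ν : ℝ} (hν : -2 < ν) : Lam ν = ∑' n, lamTerm ν n := by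
  rw [(summable_lamTerm hν).tsum_eq_zero_add, lamTerm_zero, Lam_eq_one_add_tsum]

lemma continuousOn_Lam {c : ℝ} (hc : -2 < c) : ContinuousOn Lam (Set.Ici c) := by
  have hterm (n : ℕ) : ContinuousOn (fun x => lamTerm x n) (Set.Ici c) := by
    refine continuousOn_const.div (by fun_prop) fun x hx => ?_
    have := prod_add_natCast_pos (a := x + 2) (by linarith [hx.out]) n
    positivity
  refine (continuousOn_tsum hterm
    ((summable_geometric_of_lt_one (by norm_num) (by norm_num)).mul_left _)
    fun n x hx => abs_lamTerm_le hc hx n).congr fun x hx => Lam_eq_tsum (hc.trans_le hx)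

lemma lamTerm_two_mul_pos {ν : ℝ} (hν : -2 < ν) (m : ℕ) : 0 < lamTerm ν (2 * m) := by
  have := prod_add_natCast_pos (a := ν + 2) (by linarith) (2 * m)
  rw [lamTerm, (even_two_mul m).neg_one_pow]
  positivity

lemma lamTerm_odd_add_succ (ν : ℝ) (m : ℕ) :
    lamTerm ν (2 * m + 1) + lamTerm ν (2 * m + 1 + 1) =
      -((4 ^ (2 * m + 1) * ((2 * m + 1) ! : ℝ))⁻¹ * ((∏ k ∈ range (2 * m), (ν + 3 + k))⁻¹ *
        ((ν + 2)⁻¹ * (1 - (4 * (2 * m + 1 + 1) * (ν + 2 + (2 * m + 1)))⁻¹)))) := by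
  rw [lamTerm_add_lamTerm_succ, lamTerm, prod_range_succ', (odd_two_mul_add_one m).neg_one_pow]
  push_cast
  field_simp
  ring_nf

lemma lamTerm_odd_add_succ_neg {ν : ℝ} (hν : -2 < ν) (m : ℕ) :
    lamTerm ν (2 * m + 1) + lamTerm ν (2 * m + 1 + 1) < 0 := by
  have hn : (1 : ℝ) ≤ 2 * m + 1 := by linarith [(m.cast_nonneg : (0 : ℝ) ≤ m)]
  have hν2 : 0 < ν + 2 := by linarith
  have hQ := prod_add_natCast_pos (a := ν + 3) (by linarith) (2 * m)
  have hfactor := one_sub_inv_four_mul_pos hν2 hn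
  rw [lamTerm_odd_add_succ, neg_neg_iff_pos]
  positivity

lemma strictMonoOn_lamTerm_odd_add_succ (m : ℕ) :
    StrictMonoOn (fun ν => lamTerm ν (2 * m + 1) + lamTerm ν (2 * m + 1 + 1)) (Set.Ioi (-2)) := by
  intro μ (hμ : -2 < μ) ν (hν : -2 < ν) hμν
  have hn : (1 : ℝ) ≤ 2 * m + 1 := by linarith [(m.cast_nonneg : (0 : ℝ) ≤ m)]
  have hQμ := prod_add_natCast_pos (a := μ + 3) (by linarith) (2 * m)
  have hQ : (∏ k ∈ range (2 * m), (ν + 3 + k))⁻¹ ≤ (∏ k ∈ range (2 * m), (μ + 3 + k))⁻¹ :=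
    inv_anti₀ hQμ (prod_le_prod (fun k _ => by linarith [(k.cast_nonneg : (0 : ℝ) ≤ k)])
      fun k _ => by linarith)
  have hg := strictAntiOn_inv_mul_one_sub_inv hn (show 0 < μ + 2 by linarith)
    (show 0 < ν + 2 by linarith) (by linarith)
  have hgν := mul_pos (inv_pos.2 (show 0 < ν + 2 by linarith))
    (one_sub_inv_four_mul_pos (show 0 < ν + 2 by linarith) hn)
  simp only [lamTerm_odd_add_succ, neg_lt_neg_iff]
  exact mul_lt_mul_of_pos_left (mul_lt_mul' hQ hg hgν.le (inv_pos.2 hQμ)) (by positivity)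

lemma hasSum_lamTerm_odd_add_succ {ν : ℝ} (hν : -2 < ν) :
    HasSum (fun m => lamTerm ν (2 * m + 1) + lamTerm ν (2 * m + 1 + 1)) (Lam ν - 1) := by
  rw [Lam_eq_one_add_tsum, add_sub_cancel_left]
  exact ((summable_nat_add_iff 1).2 (summable_lamTerm hν)).hasSum_add_pairs

theorem strictMonoOn_Lam : StrictMonoOn Lam (Set.Ioi (-2)) := by
  intro μ (hμ : -2 < μ) ν (hν : -2 < ν) hμν
  have := hasSum_lt (i := 0) (fun m => (strictMonoOn_lamTerm_odd_add_succ m hμ hν hμν).le)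
    (strictMonoOn_lamTerm_odd_add_succ 0 hμ hν hμν)
    (hasSum_lamTerm_odd_add_succ hμ) (hasSum_lamTerm_odd_add_succ hν)
  linarith

lemma Lam_le_one_add_lamTerm_one_add_lamTerm_two {ν : ℝ} (hν : -2 < ν) :
    Lam ν ≤ 1 + (lamTerm ν 1 + lamTerm ν 2) := by
  have := sum_le_hasSum (range 1) (fun m _ => (neg_pos.2 (lamTerm_odd_add_succ_neg hν m)).le)
    (hasSum_lamTerm_odd_add_succ hν).neg
  simp only [sum_range_one] at this
  linarith

lemma one_add_lamTerm_one_le_Lam {ν : ℝ} (hν : -2 < ν) : 1 + lamTerm ν 1 ≤ Lam ν := by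
  have hpairs := (summable_lamTerm hν).hasSum_add_pairs
  rw [← Lam_eq_tsum hν] at hpairs
  have := sum_le_hasSum (range 1) (fun m hm => ?_) hpairs
  · simpa [lamTerm_zero] using this
  have hm : m ≠ 0 := by simpa using hm
  rw [lamTerm_add_lamTerm_succ]
  exact (mul_pos (lamTerm_two_mul_pos hν m)
    (one_sub_inv_four_mul_pos (by linarith) (by exact_mod_cast (by omega : 1 ≤ 2 * m)))).le

lemma Lam_neg_two_add_inv_twelve_neg : Lam (-2 + 12⁻¹) < 0 := by
  have := Lam_le_one_add_lamTerm_one_add_lamTerm_two (show (-2 : ℝ) < -2 + 12⁻¹ by norm_num)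
  norm_num [lamTerm, prod_range_succ, factorial] at this
  linarith

lemma Lam_zero_pos : 0 < Lam 0 := by
  have := one_add_lamTerm_one_le_Lam (show (-2 : ℝ) < 0 by norm_num)
  norm_num [lamTerm] at this
  linarith

lemma exists_Lam_eq_zero : ∃ t, -2 < t ∧ Lam t = 0 := by
  obtain ⟨t, ht, ht0⟩ := intermediate_value_Icc (show (-2 + 12⁻¹ : ℝ) ≤ 0 by norm_num)
    ((continuousOn_Lam (show (-2 : ℝ) < -2 + 12⁻¹ by norm_num)).mono Set.Icc_subset_Ici_self)
    ⟨Lam_neg_two_add_inv_twelve_neg.le, Lam_zero_pos.le⟩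
  exact ⟨t, by linarith [ht.1], ht0⟩

lemma two_cpow_mul_Gamma_mul_besselJ_term {ν : ℝ} (hν : -2 < ν) (n : ℕ) :
    (2 : ℂ) ^ ((ν : ℂ) + 1) * Complex.Gamma ((ν : ℂ) + 2) *
      ((-1 : ℂ) ^ n / ((n.factorial : ℂ) * Complex.Gamma ((n : ℂ) + ((ν + 1 : ℝ) : ℂ) + 1)) *
        ((1 : ℂ) / 2) ^ (2 * (n : ℂ) + ((ν + 1 : ℝ) : ℂ))) = (lamTerm ν n : ℂ) := by
  have hz (k : ℕ) : (ν : ℂ) + 2 + k ≠ 0 :=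
    Complex.ne_zero_of_re_pos (by simp; linarith [(k.cast_nonneg : (0 : ℝ) ≤ k)])
  have hΓ : Complex.Gamma ((ν : ℂ) + 2) ≠ 0 :=
    Complex.Gamma_ne_zero_of_re_pos (by simp; linarith)
  rw [show (n : ℂ) + ((ν + 1 : ℝ) : ℂ) + 1 = (ν : ℂ) + 2 + n by push_cast; ring,
    Gamma_add_natCast_eq_mul_prod hz, Complex.ofReal_add, Complex.ofReal_one]
  have := prod_ne_zero_iff.2 fun k (_ : k ∈ range n) => hz k
  rw [lamTerm]
  push_cast
  field_simp
  rw [two_cpow_mul_half_cpow]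
  field_simp

lemma ofReal_Lam_eq {ν : ℝ} (hν : -2 < ν) :
    (Lam ν : ℂ) = (2 : ℂ) ^ ((ν : ℂ) + 1) * Complex.Gamma ((ν : ℂ) + 2) *
      besselJ (ν + 1) (1 : ℂ) := by
  rw [besselJ, ← tsum_mul_left, Lam_eq_tsum hν, Complex.ofReal_tsum]
  exact tsum_congr fun n => (two_cpow_mul_Gamma_mul_besselJ_term hν n).symm

lemma besselJ_add_one_one_eq {ν : ℝ} (hν : -2 < ν) :
    besselJ (ν + 1) 1 = ((Lam ν / (2 ^ (ν + 1) * Real.Gamma (ν + 2)) : ℝ) : ℂ) := by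
  have hΓ : Complex.Gamma ((ν : ℂ) + 2) ≠ 0 :=
    Complex.Gamma_ne_zero_of_re_pos (by simp; linarith)
  rw [Complex.ofReal_div, ofReal_Lam_eq hν, Complex.ofReal_mul,
    Complex.ofReal_cpow zero_le_two, ← Complex.Gamma_ofReal]
  push_cast
  field_simp

lemma two_rpow_mul_Gamma_pos {ν : ℝ} (hν : -2 < ν) :
    0 < (2 : ℝ) ^ (ν + 1) * Real.Gamma (ν + 2) :=
  mul_pos (Real.rpow_pos_of_pos two_pos _) (Real.Gamma_pos_of_pos (by linarith))

lemma besselJ_add_one_one_eq_zero_iff {ν : ℝ} (hν : -2 < ν) :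
    besselJ (ν + 1) 1 = 0 ↔ Lam ν = 0 := by
  rw [besselJ_add_one_one_eq hν, Complex.ofReal_eq_zero, div_eq_zero_iff,
    or_iff_left (two_rpow_mul_Gamma_pos hν).ne']

theorem stmt17 :
    StrictMonoOn Lam (Set.Ioi (-2 : ℝ)) ∧
    (∀ ν : ℝ, -2 < ν →
      (Lam ν : ℂ) = (2 : ℂ) ^ ((ν : ℂ) + 1) * Complex.Gamma ((ν : ℂ) + 2) *
        besselJ (ν + 1) (1 : ℂ)) ∧
    (∃! t : ℝ, -2 < t ∧ besselJ (t + 1) (1 : ℂ) = 0) ∧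
    (∀ t : ℝ, -2 < t → besselJ (t + 1) (1 : ℂ) = 0 →
      ∀ ν : ℝ, t < ν → 0 < (besselJ (ν + 1) (1 : ℂ)).re) := by
  have hzero {ν : ℝ} (hν : -2 < ν) := besselJ_add_one_one_eq_zero_iff hν
  obtain ⟨t, ht, hLt⟩ := exists_Lam_eq_zero
  refine ⟨strictMonoOn_Lam, fun ν hν => ofReal_Lam_eq hν,
    ⟨t, ⟨ht, (hzero ht).2 hLt⟩, fun s ⟨hs, hJs⟩ => ?_⟩, fun s hs hJs ν hsν => ?_⟩
  · exact strictMonoOn_Lam.injOn hs ht (((hzero hs).1 hJs).trans hLt.symm)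
  · have hν : -2 < ν := hs.trans hsν
    rw [besselJ_add_one_one_eq hν, Complex.ofReal_re]
    refine div_pos ?_ (two_rpow_mul_Gamma_pos hν)
    simpa [(hzero hs).1 hJs] using strictMonoOn_Lam hs hν hsν
end

section
/- If ν ≥ 0, then J_ν(1) − J_{ν+1}(1) > 0, i.e., J_ν(1) > J_{ν+1}(1). -/
open Complex

/-- Real form of the terms of the Bessel series at `z = 1`. -/
noncomputable def besselTerm (ν : ℝ) (n : ℕ) : ℝ :=
  (-1 : ℝ) ^ n * (1 / 2 : ℝ) ^ (2 * (n : ℝ) + ν) / (n.factorial * Real.Gamma (n + ν + 1))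

/-- Absolute value of the terms. -/
noncomputable def besselAbs (ν : ℝ) (n : ℕ) : ℝ :=
  (1 / 2 : ℝ) ^ (2 * (n : ℝ) + ν) / (n.factorial * Real.Gamma (n + ν + 1))

lemma gamma_pos (ν : ℝ) (hν : 0 ≤ ν) (n : ℕ) : 0 < Real.Gamma (n + ν + 1) := by
  apply Real.Gamma_pos_of_pos
  positivity

lemma besselAbs_pos (ν : ℝ) (hν : 0 ≤ ν) (n : ℕ) : 0 < besselAbs ν n := by
  have := gamma_pos ν hν n
  have h2 : (0:ℝ) < n.factorial := by exact_mod_cast n.factorial_pos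
  have h3 : (0:ℝ) < (1 / 2 : ℝ) ^ (2 * (n : ℝ) + ν) := Real.rpow_pos_of_pos (by norm_num) _
  exact div_pos h3 (by positivity)

lemma abs_besselTerm (ν : ℝ) (hν : 0 ≤ ν) (n : ℕ) : |besselTerm ν n| = besselAbs ν n := by
  have h := besselAbs_pos ν hν n
  have : |besselTerm ν n| = |(-1 : ℝ) ^ n| * besselAbs ν n := by
    rw [besselTerm, besselAbs, mul_div_assoc, abs_mul]
    congr 1
    rw [abs_of_pos]
    exact besselAbs_pos ν hν n
  simpa [abs_pow] using this

lemma rpow_succ_term (ν : ℝ) (n : ℕ) :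
    (1 / 2 : ℝ) ^ (2 * ((n : ℝ) + 1) + ν) = (1/4) * (1 / 2 : ℝ) ^ (2 * (n : ℝ) + ν) := by
  have : 2 * ((n : ℝ) + 1) + ν = (2 * (n : ℝ) + ν) + 2 := by ring
  rw [this, Real.rpow_add (by norm_num : (0:ℝ) < 1/2)]
  have : (1 / 2 : ℝ) ^ (2 : ℝ) = 1/4 := by
    rw [show (2:ℝ) = ((2:ℕ):ℝ) by norm_num, Real.rpow_natCast]; norm_num
  rw [this]; ring

lemma gamma_succ (ν : ℝ) (hν : 0 ≤ ν) (n : ℕ) :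
    Real.Gamma ((n+1 : ℕ) + ν + 1) = ((n : ℝ) + ν + 1) * Real.Gamma (n + ν + 1) := by
  have h : ((n+1 : ℕ) : ℝ) + ν + 1 = ((n : ℝ) + ν + 1) + 1 := by push_cast; ring
  rw [h, Real.Gamma_add_one (by positivity)]

lemma besselAbs_succ_le (ν : ℝ) (hν : 0 ≤ ν) (n : ℕ) :
    besselAbs ν (n + 1) ≤ (1/4) * besselAbs ν n := by
  have hg := gamma_pos ν hν n
  have hf : (0:ℝ) < n.factorial := by exact_mod_cast n.factorial_pos
  have hp : (0:ℝ) < (1 / 2 : ℝ) ^ (2 * (n : ℝ) + ν) := Real.rpow_pos_of_pos (by norm_num) _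
  have hgam : Real.Gamma (((n+1 : ℕ) : ℝ) + ν + 1)
      = ((n : ℝ) + ν + 1) * Real.Gamma ((n : ℝ) + ν + 1) := by
    have h : ((n+1 : ℕ) : ℝ) + ν + 1 = ((n : ℝ) + ν + 1) + 1 := by push_cast; ring
    rw [h, Real.Gamma_add_one (by positivity)]
  rw [besselAbs, besselAbs]
  push_cast [Nat.factorial_succ] at hgam ⊢
  rw [hgam, rpow_succ_term ν n, ← mul_div_assoc]
  rw [div_le_div_iff₀ (by positivity) (by positivity)]
  have hn : (0:ℝ) ≤ (n:ℝ) := n.cast_nonneg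
  nlinarith [mul_pos hp (mul_pos hf hg),
    mul_nonneg hn (mul_pos hp (mul_pos hf hg)).le,
    mul_nonneg hν (mul_pos hp (mul_pos hf hg)).le,
    mul_nonneg (mul_nonneg hn hn) (mul_pos hp (mul_pos hf hg)).le,
    mul_nonneg (mul_nonneg hn hν) (mul_pos hp (mul_pos hf hg)).le]

lemma summable_besselTerm (ν : ℝ) (hν : 0 ≤ ν) : Summable (besselTerm ν) := by
  apply summable_of_ratio_norm_eventually_le (r := 1/2) (by norm_num)
  filter_upwards with n
  rw [Real.norm_eq_abs, Real.norm_eq_abs, abs_besselTerm ν hν, abs_besselTerm ν hν]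
  calc besselAbs ν (n+1) ≤ (1/4) * besselAbs ν n := besselAbs_succ_le ν hν n
    _ ≤ (1/2) * besselAbs ν n := by nlinarith [besselAbs_pos ν hν n]

lemma besselJ_one_eq (ν : ℝ) : besselJ ν 1 = ((∑' n, besselTerm ν n : ℝ) : ℂ) := by
  rw [besselJ, Complex.ofReal_tsum]
  apply tsum_congr
  intro n
  have h1 : ((n:ℂ) + (ν:ℂ) + 1) = (((n : ℝ) + ν + 1 : ℝ) : ℂ) := by push_cast; ring
  have h2 : ((1 : ℂ) / 2) ^ (2 * (n : ℂ) + (ν : ℂ))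
      = (((1/2 : ℝ) ^ (2 * (n : ℝ) + ν) : ℝ) : ℂ) := by
    rw [Complex.ofReal_cpow (by norm_num : (0:ℝ) ≤ 1/2)]
    push_cast
    norm_num
  rw [h1, Complex.Gamma_ofReal, h2, besselTerm]
  push_cast
  ring

/-- The pair differences. -/
noncomputable def bb (ν : ℝ) (n : ℕ) : ℝ :=
  (1 / 2 : ℝ) ^ (2 * (n : ℝ) + ν) * ((n : ℝ) + ν + 1/2) / (n.factorial * Real.Gamma (n + ν + 2))

lemma gamma2_pos (ν : ℝ) (hν : 0 ≤ ν) (n : ℕ) : 0 < Real.Gamma (n + ν + 2) := by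
  apply Real.Gamma_pos_of_pos; positivity

lemma bb_pos (ν : ℝ) (hν : 0 ≤ ν) (n : ℕ) : 0 < bb ν n := by
  have := gamma2_pos ν hν n
  have h2 : (0:ℝ) < n.factorial := by exact_mod_cast n.factorial_pos
  have h3 : (0:ℝ) < (1 / 2 : ℝ) ^ (2 * (n : ℝ) + ν) := Real.rpow_pos_of_pos (by norm_num) _
  have h4 : (0:ℝ) < (n : ℝ) + ν + 1/2 := by positivity
  exact div_pos (by positivity) (by positivity)

lemma besselTerm_sub (ν : ℝ) (hν : 0 ≤ ν) (n : ℕ) :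
    besselTerm ν n - besselTerm (ν + 1) n = (-1 : ℝ) ^ n * bb ν n := by
  have hg := gamma_pos ν hν n
  have hg2 := gamma2_pos ν hν n
  have hf : (0:ℝ) < n.factorial := by exact_mod_cast n.factorial_pos
  have hgam : Real.Gamma ((n : ℝ) + ν + 2) = ((n : ℝ) + ν + 1) * Real.Gamma ((n : ℝ) + ν + 1) := by
    have h : (n : ℝ) + ν + 2 = ((n : ℝ) + ν + 1) + 1 := by ring
    rw [h, Real.Gamma_add_one (by positivity)]
  have hpow : (1 / 2 : ℝ) ^ (2 * (n : ℝ) + (ν + 1))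
      = (1/2) * (1 / 2 : ℝ) ^ (2 * (n : ℝ) + ν) := by
    have h : 2 * (n : ℝ) + (ν + 1) = (2 * (n : ℝ) + ν) + 1 := by ring
    rw [h, Real.rpow_add (by norm_num : (0:ℝ) < 1/2), Real.rpow_one]; ring
  rw [besselTerm, besselTerm, bb]
  have h1 : (n : ℝ) + (ν + 1) + 1 = (n : ℝ) + ν + 2 := by ring
  rw [h1, hpow, hgam]
  have hn1 : (0:ℝ) < (n : ℝ) + ν + 1 := by positivity
  field_simp
  ring

lemma bb_succ_le (ν : ℝ) (hν : 0 ≤ ν) (n : ℕ) : bb ν (n + 1) ≤ (3/8) * bb ν n := by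
  have hg2 := gamma2_pos ν hν n
  have hf : (0:ℝ) < n.factorial := by exact_mod_cast n.factorial_pos
  have hp : (0:ℝ) < (1 / 2 : ℝ) ^ (2 * (n : ℝ) + ν) := Real.rpow_pos_of_pos (by norm_num) _
  have hgam : Real.Gamma (((n+1 : ℕ) : ℝ) + ν + 2)
      = ((n : ℝ) + ν + 2) * Real.Gamma ((n : ℝ) + ν + 2) := by
    have h : ((n+1 : ℕ) : ℝ) + ν + 2 = ((n : ℝ) + ν + 2) + 1 := by push_cast; ring
    rw [h, Real.Gamma_add_one (by positivity)]
  rw [bb, bb]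
  push_cast [Nat.factorial_succ] at hgam ⊢
  rw [hgam, rpow_succ_term ν n, ← mul_div_assoc]
  rw [div_le_div_iff₀ (by positivity) (by positivity)]
  have hn : (0:ℝ) ≤ (n:ℝ) := n.cast_nonneg
  nlinarith [mul_pos hf hg2, mul_pos hp (mul_pos hf hg2),
    mul_nonneg hn (mul_pos hp (mul_pos hf hg2)).le,
    mul_nonneg hν (mul_pos hp (mul_pos hf hg2)).le,
    mul_nonneg (mul_nonneg hn hn) (mul_pos hp (mul_pos hf hg2)).le,
    mul_nonneg (mul_nonneg hν hν) (mul_pos hp (mul_pos hf hg2)).le,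
    mul_nonneg (mul_nonneg hn hν) (mul_pos hp (mul_pos hf hg2)).le]

lemma bb_le_geom (ν : ℝ) (hν : 0 ≤ ν) (n : ℕ) : bb ν n ≤ (3/8 : ℝ) ^ n * bb ν 0 := by
  induction n with
  | zero => simp
  | succ n ih =>
    calc bb ν (n+1) ≤ (3/8) * bb ν n := bb_succ_le ν hν n
      _ ≤ (3/8) * ((3/8 : ℝ) ^ n * bb ν 0) := by nlinarith
      _ = (3/8 : ℝ) ^ (n+1) * bb ν 0 := by ring

set_option maxHeartbeats 1000000 in
lemma summable_neg_pow_bb (ν : ℝ) (hν : 0 ≤ ν) :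
    Summable fun n => (-1 : ℝ) ^ n * bb ν n := by
  apply Summable.of_norm
  apply Summable.of_nonneg_of_le (f := fun n => (3/8 : ℝ) ^ n * bb ν 0)
    (fun n => norm_nonneg _)
  · intro n
    rw [Real.norm_eq_abs, abs_mul, _root_.abs_pow, _root_.abs_neg, abs_one, one_pow, one_mul,
      abs_of_pos (bb_pos ν hν n)]
    exact bb_le_geom ν hν n
  · exact (summable_geometric_of_lt_one (r := 3/8) (by norm_num) (by norm_num)).mul_right _

lemma tsum_geom_shift (ν : ℝ) : ∑' n : ℕ, (3/8 : ℝ) ^ (n+1) * bb ν 0 = 3/5 * bb ν 0 := by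
  have h : ∀ n : ℕ, (3/8 : ℝ) ^ (n+1) * bb ν 0 = (3/8) * bb ν 0 * (3/8 : ℝ) ^ n := by
    intro n; ring
  rw [tsum_congr h, tsum_mul_left, tsum_geometric_of_lt_one (by norm_num) (by norm_num)]
  ring

set_option maxHeartbeats 1000000 in
lemma key_pos (ν : ℝ) (hν : 0 ≤ ν) : 0 < ∑' n, ((-1 : ℝ) ^ n * bb ν n) := by
  have hsum := summable_neg_pow_bb ν hν
  have hsum' : Summable fun n => (-1 : ℝ) ^ (n+1) * bb ν (n+1) :=
    (summable_nat_add_iff (f := fun n => (-1:ℝ)^n * bb ν n) 1).2 hsum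
  have hgeo : Summable fun n : ℕ => (3/8 : ℝ) ^ (n+1) * bb ν 0 := by
    have := ((summable_geometric_of_lt_one (r := 3/8) (by norm_num)
      (by norm_num)).mul_right (bb ν 0))
    exact (summable_nat_add_iff (f := fun n : ℕ => (3/8:ℝ)^n * bb ν 0) 1).2 this
  have h2 : ∀ n : ℕ, |(-1 : ℝ) ^ (n+1) * bb ν (n+1)| = bb ν (n+1) := by
    intro n
    rw [abs_mul, _root_.abs_pow, _root_.abs_neg, abs_one, one_pow, one_mul,
      abs_of_pos (bb_pos ν hν (n+1))]
  have h2' : ∀ n : ℕ, |bb ν (n+1)| = bb ν (n+1) := fun n => abs_of_pos (bb_pos ν hν (n+1))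
  have habs' : Summable fun n => bb ν (n+1) := by
    have := hsum'.abs
    simpa [h2, h2'] using this
  have h1 : |∑' n, ((-1 : ℝ) ^ (n+1) * bb ν (n+1))| ≤ ∑' n, bb ν (n+1) := by
    have := norm_tsum_le_tsum_norm (f := fun n => (-1 : ℝ) ^ (n+1) * bb ν (n+1))
      (by simpa [Real.norm_eq_abs, h2, h2'] using habs')
    simpa [Real.norm_eq_abs, h2, h2'] using this
  have h3 : ∑' n, bb ν (n+1) ≤ ∑' n : ℕ, (3/8 : ℝ) ^ (n+1) * bb ν 0 :=
    Summable.tsum_le_tsum (fun n => bb_le_geom ν hν (n+1)) habs' hgeo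
  have habs : |∑' n, ((-1 : ℝ) ^ (n+1) * bb ν (n+1))| ≤ 3/5 * bb ν 0 := by
    calc |∑' n, ((-1 : ℝ) ^ (n+1) * bb ν (n+1))| ≤ _ := h1
      _ ≤ _ := h3
      _ = _ := tsum_geom_shift ν
  rw [Summable.tsum_eq_zero_add hsum]
  have hb0 := bb_pos ν hν 0
  have := (abs_le.1 habs).1
  simp only [pow_zero, one_mul]
  linarith

theorem stmt18 (ν : ℝ) (hν : 0 ≤ ν) :
    0 < (besselJ ν (1 : ℂ) - besselJ (ν + 1) (1 : ℂ)).re := by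
  rw [besselJ_one_eq, besselJ_one_eq, ← Complex.ofReal_sub, Complex.ofReal_re]
  have hν1 : (0:ℝ) ≤ ν + 1 := by linarith
  have hs1 := summable_besselTerm ν hν
  have hs2 := summable_besselTerm (ν+1) hν1
  rw [← Summable.tsum_sub hs1 hs2, tsum_congr (besselTerm_sub ν hν)]
  exact key_pos ν hν
end
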